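/- arXiv:1109.2946 — 3 statements merged into one kernel-verified Lean document; each statement's English description precedes it below -/
import Mathlib

section
/- Separation from all but the nearest m-th root rotation: let m ≥ 2 be an integerse, and a, b ∈ ℂ. For j = 0, 1, …, m − 1 set w_j = e^{2πij/m}·b, and let j₀ be an index minimizing |a − w_j| over j ∈ {0, …, m − 1}. Then for every j ∈ {0, …, m − 1} with j ≠ j₀ one has |a − w_j| ≥ |a|·sin(π/m) ≥ (2/m)·|a|. -/
/-!
The points `w_j` are the rotations of `b` by multiples of `2π/m`, so two distinct ones make an
angle at least `2π/m` at the origin. By the triangle inequality for angles, `a` makes an angle at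
least `π/m` with `w_j` or with `w_{j₀}`. A vector making an angle `θ ∈ [0, π]` with `a` lies at
distance at least `‖a‖ sin θ` from `a`, and minimality of `j₀` carries the second case over to `w_j`.
-/

open Real Complex InnerProductGeometry

theorem norm_mul_sin_le_norm_sub_of_le_angle {V : Type*} [NormedAddCommGroup V]
    [InnerProductSpace ℝ V] {x y : V} {θ : ℝ} (hθ₀ : 0 ≤ θ) (hθ : θ ≤ angle x y) :
    ‖x‖ * Real.sin θ ≤ ‖x - y‖ := by
  have hcos : Real.cos (angle x y) ≤ Real.cos θ :=
    cos_le_cos_of_nonneg_of_le_pi hθ₀ (angle_le_pi x y) hθ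
  have hsin : 0 ≤ Real.sin θ := sin_nonneg_of_nonneg_of_le_pi hθ₀ (hθ.trans (angle_le_pi x y))
  have hsq : (‖x‖ * Real.sin θ) ^ 2 ≤ ‖x - y‖ ^ 2 := by
    rw [sq ‖x - y‖, norm_sub_sq_eq_norm_sq_add_norm_sq_sub_two_mul_norm_mul_norm_mul_cos_angle]
    -- `‖x‖² + ‖y‖² - 2‖x‖‖y‖ cos θ = (‖y‖ - ‖x‖ cos θ)² + (‖x‖ sin θ)²`
    nlinarith [sq_nonneg (‖y‖ - ‖x‖ * Real.cos θ), Real.sin_sq_add_cos_sq θ,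
      mul_le_mul_of_nonneg_left hcos (mul_nonneg (norm_nonneg x) (norm_nonneg y))]
  exact pow_le_pow_iff_left₀ (mul_nonneg (norm_nonneg x) hsin) (norm_nonneg _) two_ne_zero |>.1 hsq

theorem two_div_le_sin_pi_div {x : ℝ} (hx : 2 ≤ x) : 2 / x ≤ Real.sin (π / x) := by
  have hle : π / x ≤ π / 2 := div_le_div_of_nonneg_left pi_pos.le two_pos hx
  calc 2 / x = 2 / π * (π / x) := by field_simp
    _ ≤ Real.sin (π / x) := mul_le_sin (by positivity) hle

theorem two_pi_div_le_abs_toIocMod_of_not_dvd {m : ℕ} {n : ℤ} (hn : ¬ (m : ℤ) ∣ n) :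
    2 * π / m ≤ |toIocMod two_pi_pos (-π) (2 * π * n / m)| := by
  rcases Nat.eq_zero_or_pos m with rfl | hm
  · simp
  set k := toIocDiv two_pi_pos (-π) (2 * π * n / m)
  have hk : toIocMod two_pi_pos (-π) (2 * π * n / m) = 2 * π / m * ((n - m * k : ℤ) : ℝ) := by
    rw [toIocMod, zsmul_eq_mul]; push_cast; field_simp; ring
  have hne : n - m * k ≠ 0 := fun h => hn ⟨k, by linarith⟩
  rw [hk, abs_mul, abs_of_pos (by positivity), ← Int.cast_abs]
  exact le_mul_of_one_le_right (by positivity) (by exact_mod_cast Int.one_le_abs hne)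

theorem two_pi_div_le_angle_exp_of_ne {m j k : ℕ} (hj : j < m) (hk : k < m) (hjk : j ≠ k) :
    2 * π / m ≤ angle (exp (2 * π * I * j / m)) (exp (2 * π * I * k / m)) := by
  have hexp (l : ℕ) : exp (2 * π * I * l / m) = exp (↑(2 * π * l / m) * I) := by
    push_cast; ring_nf
  have hsub : 2 * π * j / m - 2 * π * k / m = 2 * π * ((j - k : ℤ) : ℝ) / m := by
    push_cast; ring
  have hndvd : ¬ (m : ℤ) ∣ j - k := fun h =>
    hjk (by have := Int.eq_zero_of_abs_lt_dvd h (by rw [abs_lt]; omega); omega)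
  rw [hexp, hexp, angle_exp_exp, hsub]
  exact two_pi_div_le_abs_toIocMod_of_not_dvd hndvd

/-- Separation from all but the nearest `m`-th root rotation: for the points
`w_j = e^{2πij/m} b`, `j = 0, …, m-1`, if `j₀` minimizes `|a - w_j|`, then every
other `w_j` satisfies `|a - w_j| ≥ |a| sin(π/m) ≥ (2/m) |a|`. -/
theorem mth_root_rotation_separation (m : ℕ) (hm : 2 ≤ m) (a b : ℂ)
    (j₀ : ℕ) (hj₀ : j₀ < m)
    (hmin : ∀ j < m,
      ‖a - Complex.exp (2 * Real.pi * Complex.I * j₀ / m) * b‖ ≤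
        ‖a - Complex.exp (2 * Real.pi * Complex.I * j / m) * b‖) :
    ∀ j < m, j ≠ j₀ →
      ‖a‖ * Real.sin (Real.pi / m) ≤
          ‖a - Complex.exp (2 * Real.pi * Complex.I * j / m) * b‖ ∧
      (2 / (m : ℝ)) * ‖a‖ ≤ ‖a‖ * Real.sin (Real.pi / m) := by
  intro j hj hne
  refine ⟨?_, by rw [mul_comm]; gcongr; exact two_div_le_sin_pi_div (by exact_mod_cast hm)⟩
  rcases eq_or_ne b 0 with rfl | hb
  · simpa using mul_le_of_le_one_right (norm_nonneg a) (Real.sin_le_one _)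
  set w : ℕ → ℂ := fun l => exp (2 * π * I * l / m) * b
  have hsep : 2 * π / m ≤ angle (w j) (w j₀) := by
    simpa [w, angle_mul_right hb] using two_pi_div_le_angle_exp_of_ne hj hj₀ hne
  have htri := angle_le_angle_add_angle (w j) a (w j₀)
  have hπm : 0 ≤ π / m := by positivity
  rcases le_or_gt (π / m) (angle a (w j)) with hfar | hnear
  · exact norm_mul_sin_le_norm_sub_of_le_angle hπm hfar
  · have hfar₀ : π / m ≤ angle a (w j₀) := by
      rw [angle_comm (w j) a] at htri
      linarith [show 2 * π / m = π / m + π / m by ring]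
    exact (norm_mul_sin_le_norm_sub_of_le_angle hπm hfar₀).trans (hmin j hj)
end

section
/- The contraction factor of the inclusion of the punctured disk into the disk: define a(x) = 2·x·log(1/x)/(1 − x²) for x ∈ (0, 1), where log denotes the natural logarithm. Then a(x) < 1 for every x ∈ (0, 1), and a is strictly increasing on (0, 1). -/
/-!
Put `t = log (1 / x)`, so that `x ∈ (0, 1)` corresponds to `t ∈ (0, ∞)` and
`(1 - x²) / (2x) = (1/x - x) / 2 = sinh t`. Hence the contraction factor is `t / sinh t`.
It is `< 1` because `t < sinh t`, and it decreases in `t` because `sinh` is strictly convex on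
`[0, ∞)` with `sinh 0 = 0`, so its secant slope `sinh t / t` increases. As `t` decreases in `x`,
the factor increases in `x`.
-/

open Real Set

lemma strictConvexOn_sinh_Ici : StrictConvexOn ℝ (Ici 0) sinh := by
  refine StrictMonoOn.strictConvexOn_of_deriv (convex_Ici 0) continuous_sinh.continuousOn ?_
  rw [Real.deriv_sinh, interior_Ici]
  exact cosh_strictMonoOn.mono Ioi_subset_Ici_self

lemma strictMonoOn_sinh_div_self : StrictMonoOn (fun t => sinh t / t) (Ioi 0) := by
  intro s hs t ht hst
  simpa using strictConvexOn_sinh_Ici.secant_strict_mono self_mem_Ici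
    (Ioi_subset_Ici_self hs) (Ioi_subset_Ici_self ht) hs.ne' ht.ne' hst

lemma strictAntiOn_self_div_sinh : StrictAntiOn (fun t => t / sinh t) (Ioi 0) := by
  intro s hs t ht hst
  have hs' : 0 < sinh s / s := div_pos (sinh_pos_iff.mpr hs) hs
  simpa only [inv_div] using inv_strictAnti₀ hs' (strictMonoOn_sinh_div_self hs ht hst)

lemma self_div_sinh_lt_one {t : ℝ} (ht : 0 < t) : t / sinh t < 1 :=
  (div_lt_one (sinh_pos_iff.mpr ht)).mpr (self_lt_sinh_iff.mpr ht)

lemma log_one_div_pos {x : ℝ} (hx : x ∈ Ioo (0 : ℝ) 1) : 0 < log (1 / x) := by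
  rw [one_div, log_inv, neg_pos]
  exact log_neg hx.1 hx.2

lemma strictAntiOn_log_one_div : StrictAntiOn (fun x : ℝ => log (1 / x)) (Ioi 0) := by
  intro x hx y hy hxy
  simp only [one_div, log_inv, neg_lt_neg_iff]
  exact log_lt_log hx hxy

lemma mul_log_one_div_div_one_sub_sq {x : ℝ} (hx : 0 < x) :
    2 * x * log (1 / x) / (1 - x ^ 2) = log (1 / x) / sinh (log (1 / x)) := by
  rw [sinh_log (one_div_pos.mpr hx)]
  field_simp

/-- The contraction factor of the inclusion of the punctured disk into the disk:
`a(x) = 2 x log(1/x) / (1 - x²)` satisfies `a(x) < 1` for all `x ∈ (0, 1)` and `a` is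
strictly increasing on `(0, 1)`. -/
theorem punctured_disk_inclusion_contraction :
    (∀ x ∈ Set.Ioo (0 : ℝ) 1, 2 * x * Real.log (1 / x) / (1 - x ^ 2) < 1) ∧
    StrictMonoOn (fun x : ℝ => 2 * x * Real.log (1 / x) / (1 - x ^ 2))
      (Set.Ioo (0 : ℝ) 1) := by
  have h_eq : EqOn (fun x : ℝ => 2 * x * log (1 / x) / (1 - x ^ 2))
      ((fun t => t / sinh t) ∘ fun x => log (1 / x)) (Ioo 0 1) := fun x hx =>
    mul_log_one_div_div_one_sub_sq hx.1
  refine ⟨fun x hx => (h_eq hx).trans_lt (self_div_sinh_lt_one (log_one_div_pos hx)), ?_⟩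
  refine StrictMonoOn.congr ?_ h_eq.symm
  exact strictAntiOn_self_div_sinh.comp (strictAntiOn_log_one_div.mono Ioo_subset_Ioi_self)
    fun _ => log_one_div_pos
end

section
/- Fatou's theorem on critical points in immediate basins (polynomial case): let f be a polynomial with complex coefficients of degree d ≥ 2, and let z₀ ∈ ℂ be an attracting fixed point of f, i.e. f(z₀) = z₀ and |f'(z₀)| < 1. Let B = {z ∈ ℂ : f^{∘n}(z) → z₀ as n → ∞} be the basin of attraction of z₀, and let B₀ be the connected component of B containing z₀ (the immediate basin). Then B₀ contains a critical point of f, i.e. there exists c ∈ B₀ with f'(c) = 0. -/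
/-!
If the immediate basin `Ω` contained no critical point, every iterate `f^[n]` would be a local
homeomorphism of the open set `Ω` into itself. Its restriction to the compact set
`Ω ∩ (f^[n])⁻¹ (closedBall z₀ r)` is then a covering over the disc `ball z₀ r`, which is simply
connected, so the branch of `(f^[n])⁻¹` fixing `z₀` is defined and holomorphic on the whole disc,
with values in `Ω`. Since `deg f ≥ 2`, `Ω` is bounded, say `Ω ⊆ ball z₀ R`, and the Schwarz lemma
gives `‖f'(z₀)‖⁻ⁿ ≤ R / r` for every `n`, contradicting `‖f'(z₀)‖ < 1`.
-/

open Metric Set Filter Topology Bornology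

theorem isLocalHomeomorphOn_subtypeVal {X : Type*} [TopologicalSpace X] {K U : Set X}
    (hU : IsOpen U) (hUK : U ⊆ K) :
    IsLocalHomeomorphOn (Subtype.val : K → X) (Subtype.val ⁻¹' U) := by
  rw [isLocalHomeomorphOn_iff_isOpenEmbedding_restrict]
  intro x hx
  refine ⟨_, (hU.preimage continuous_subtype_val).mem_nhds hx, ?_⟩
  refine ⟨IsEmbedding.subtypeVal.comp IsEmbedding.subtypeVal, ?_⟩
  convert hU
  ext y
  simp only [mem_range, domRestrict_apply, Subtype.exists, mem_preimage]
  exact ⟨fun ⟨_, _, h, rfl⟩ => h, fun hy => ⟨y, hUK hy, hy, rfl⟩⟩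

theorem isLocalHomeomorphOn_of_hasStrictDerivAt {𝕜 : Type*} [NontriviallyNormedField 𝕜]
    [CompleteSpace 𝕜] {f : 𝕜 → 𝕜} {s : Set 𝕜}
    (hf : ∀ x ∈ s, ∃ d ≠ 0, HasStrictDerivAt f d x) : IsLocalHomeomorphOn f s := by
  refine IsLocalHomeomorphOn.mk f s fun x hx => ?_
  obtain ⟨d, hd, hfd⟩ := hf x hx
  have hf' := hfd.hasStrictFDerivAt_equiv hd
  exact ⟨hf'.toOpenPartialHomeomorph f, hf'.mem_toOpenPartialHomeomorph_source,
    fun y _ => by rw [hf'.toOpenPartialHomeomorph_coe]⟩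

theorem exists_continuousOn_section_ball {X E : Type*} [TopologicalSpace X] [T2Space X]
    [NormedAddCommGroup E] [NormedSpace ℝ E] {p : X → E} (hp : Continuous p) {Ω : Set X}
    (hΩ : IsOpen Ω) (hloc : IsLocalHomeomorphOn p Ω) {z₀ : E} {r : ℝ} (hr : 0 < r)
    (hK : IsCompact (Ω ∩ p ⁻¹' closedBall z₀ r)) {x₀ : X} (hx₀ : x₀ ∈ Ω) (hpx₀ : p x₀ = z₀) :
    ∃ h : E → X, ContinuousOn h (ball z₀ r) ∧ h z₀ = x₀ ∧
      ∀ z ∈ ball z₀ r, h z ∈ Ω ∧ p (h z) = z := by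
  classical
  set K := Ω ∩ p ⁻¹' closedBall z₀ r
  have : CompactSpace K := isCompact_iff_compactSpace.mp hK
  have : SimplyConnectedSpace (ball z₀ r) :=
    have := contractibleSpace_ball (x := z₀) hr; inferInstance
  have : LocallyPathConnectedSpace (ball z₀ r) := isOpen_ball.locallyPathConnectedSpace
  have hU : IsOpen (Ω ∩ p ⁻¹' ball z₀ r) := hΩ.inter (isOpen_ball.preimage hp)
  have hUK : Ω ∩ p ⁻¹' ball z₀ r ⊆ K :=
    inter_subset_inter_right _ (preimage_mono ball_subset_closedBall)
  have hcov : IsCoveringMapOn (p ∘ Subtype.val : K → E) (ball z₀ r) := by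
    refine IsCoveringMapOn.of_isLocalHomeomorphOn (hp.comp continuous_subtype_val) ?_
    refine (hloc.comp (isLocalHomeomorphOn_subtypeVal hU hUK) fun y hy => hy.1).mono
      fun y hy => ⟨y.2.1, hy⟩
  obtain ⟨F, ⟨hF₀, hFp⟩, -⟩ := hcov.existsUnique_continuousMap_lifts
    ⟨Subtype.val, continuous_subtype_val⟩ (a₀ := ⟨z₀, mem_ball_self hr⟩)
    (e₀ := ⟨x₀, hx₀, by simp [hpx₀, hr.le]⟩) hpx₀ fun z => z.2
  refine ⟨fun z => if hz : z ∈ ball z₀ r then F ⟨z, hz⟩ else x₀, ?_, by simp [hr, hF₀], ?_⟩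
  · rw [continuousOn_iff_continuous_domRestrict]
    convert continuous_subtype_val.comp F.continuous
    ext z
    exact dif_pos z.2
  · intro z hz
    simp only [hz, dite_true]
    exact ⟨(F ⟨z, hz⟩).2.1, congrFun hFp ⟨z, hz⟩⟩

theorem exists_hasStrictDerivAt_iterate {𝕜 : Type*} [NontriviallyNormedField 𝕜] {g : 𝕜 → 𝕜}
    {s : Set 𝕜} (hs : MapsTo g s s) (hg : ∀ x ∈ s, ∃ d ≠ 0, HasStrictDerivAt g d x) (n : ℕ) :
    ∀ x ∈ s, ∃ d ≠ 0, HasStrictDerivAt g^[n] d x := by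
  induction n with
  | zero => exact fun x _ => ⟨1, one_ne_zero, hasStrictDerivAt_id x⟩
  | succ n ih =>
    intro x hx
    obtain ⟨d, hd, hgd⟩ := hg x hx
    obtain ⟨e, he, hge⟩ := ih (g x) (hs hx)
    rw [Function.iterate_succ]
    exact ⟨e * d, mul_ne_zero he hd, hge.comp x hgd⟩

theorem div_le_norm_deriv_of_isCompact_inter_preimage {p : ℂ → ℂ} (hp : Continuous p)
    {Ω : Set ℂ} (hΩ : IsOpen Ω) (hp' : ∀ x ∈ Ω, ∃ d ≠ 0, HasStrictDerivAt p d x) {x₀ : ℂ}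
    (hx₀ : x₀ ∈ Ω) {r R : ℝ} (hr : 0 < r) (hΩR : Ω ⊆ ball x₀ R)
    (hK : IsCompact (Ω ∩ p ⁻¹' closedBall (p x₀) r)) :
    r / R ≤ ‖deriv p x₀‖ := by
  obtain ⟨h, hc, hx₀', hh⟩ := exists_continuousOn_section_ball hp hΩ
    (isLocalHomeomorphOn_of_hasStrictDerivAt hp') hr hK hx₀ rfl
  have hderiv : ∀ z ∈ ball (p x₀) r, HasDerivAt h (deriv p (h z))⁻¹ z := by
    intro z hz
    obtain ⟨d, hd, hpd⟩ := hp' (h z) (hh z hz).1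
    rw [hpd.hasDerivAt.deriv]
    refine hpd.hasDerivAt.of_local_left_inverse (hc.continuousAt (isOpen_ball.mem_nhds hz)) hd ?_
    filter_upwards [isOpen_ball.mem_nhds hz] with w hw using (hh w hw).2
  have hSchwarz := Complex.norm_deriv_le_div_of_mapsTo_ball
    (fun z hz => (hderiv z hz).differentiableAt.differentiableWithinAt)
    (fun z hz => hx₀' ▸ ball_subset_closedBall (hΩR (hh z hz).1)) hr
  rw [(hderiv _ (mem_ball_self hr)).deriv, hx₀', norm_inv] at hSchwarz
  obtain ⟨d, hd, hpd⟩ := hp' x₀ hx₀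
  have hR : 0 < R := dist_nonneg.trans_lt (hΩR hx₀)
  rw [hpd.hasDerivAt.deriv] at hSchwarz ⊢
  simpa using (inv_le_comm₀ (norm_pos_iff.2 hd) (div_pos hR hr)).1 hSchwarz

section Basin

variable {α : Type*}

def basin [TopologicalSpace α] (g : α → α) (z₀ : α) : Set α :=
  {z | Tendsto (fun n => g^[n] z) atTop (𝓝 z₀)}

theorem iterate_mem_basin_iff [TopologicalSpace α] {g : α → α} {z₀ z : α} (n : ℕ) :
    g^[n] z ∈ basin g z₀ ↔ z ∈ basin g z₀ := by
  simp only [basin, mem_ofPred_eq, ← Function.iterate_add_apply]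
  exact tendsto_add_atTop_iff_nat (f := fun m => g^[m] z) n

theorem isOpen_basin [TopologicalSpace α] {g : α → α} (hg : Continuous g) {z₀ : α}
    (h : basin g z₀ ∈ 𝓝 z₀) : IsOpen (basin g z₀) := by
  refine isOpen_iff_mem_nhds.2 fun z hz => ?_
  obtain ⟨n, hn⟩ := (hz.eventually (interior_mem_nhds.2 h)).exists
  filter_upwards [(hg.iterate n).continuousAt.preimage_mem_nhds (isOpen_interior.mem_nhds hn)]
    with w hw using (iterate_mem_basin_iff n).1 (interior_subset hw)

theorem closedBall_subset_basin_of_lipschitzOnWith [PseudoMetricSpace α] {g : α → α} {z₀ : α}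
    {r : ℝ} {K : NNReal} (hK : K < 1) (hg : LipschitzOnWith K g (closedBall z₀ r))
    (hfix : g z₀ = z₀) : closedBall z₀ r ⊆ basin g z₀ := by
  have hcontract : ∀ z ∈ closedBall z₀ r, dist (g z) z₀ ≤ K * dist z z₀ := fun z hz => by
    simpa [hfix] using hg.dist_le_mul z hz z₀ (mem_closedBall_self (dist_nonneg.trans hz))
  have horbit : ∀ z ∈ closedBall z₀ r, ∀ n : ℕ,
      g^[n] z ∈ closedBall z₀ r ∧ dist (g^[n] z) z₀ ≤ K ^ n * dist z z₀ := by
    intro z hz n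
    induction n with
    | zero => simpa using hz
    | succ n ih =>
      have hstep := hcontract _ ih.1
      rw [Function.iterate_succ_apply', pow_succ']
      refine ⟨?_, ?_⟩
      · exact hstep.trans (mul_le_of_le_one_left dist_nonneg hK.le) |>.trans ih.1
      · exact hstep.trans (by rw [mul_assoc]; gcongr; exact ih.2)
  intro z hz
  refine tendsto_iff_dist_tendsto_zero.2 <| squeeze_zero (fun _ => dist_nonneg)
    (fun n => (horbit z hz n).2) ?_
  simpa using (tendsto_pow_atTop_nhds_zero_of_lt_one K.2 hK).mul_const (dist z z₀)

theorem exists_closedBall_subset_basin {𝕜 : Type*} [NontriviallyNormedField 𝕜] {g : 𝕜 → 𝕜}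
    {z₀ a : 𝕜} (hg : HasStrictDerivAt g a z₀) (hfix : g z₀ = z₀) (ha : ‖a‖ < 1) :
    ∃ r > 0, closedBall z₀ r ⊆ basin g z₀ := by
  obtain ⟨K, haK, hK⟩ := exists_between (show ‖a‖₊ < 1 from ha)
  obtain ⟨s, hs, hgs⟩ := hg.hasStrictFDerivAt.exists_lipschitzOnWith_of_nnnorm_lt K
    (by simpa using haK)
  obtain ⟨r, hr, hrs⟩ := nhds_basis_closedBall.mem_iff.1 hs
  exact ⟨r, hr, closedBall_subset_basin_of_lipschitzOnWith hK (hgs.mono hrs) hfix⟩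

theorem isBounded_basin [SeminormedAddCommGroup α] {g : α → α}
    (hg : ∀ᶠ z in cobounded α, 2 * ‖z‖ ≤ ‖g z‖) (z₀ : α) :
    IsBounded (basin g z₀) := by
  obtain ⟨M, -, hM⟩ := (hasBasis_cobounded_compl_closedBall (0 : α)).eventually_iff.1 hg
  refine (isBounded_closedBall (x := 0) (r := max M 0)).subset fun z hzB => ?_
  by_contra hzM
  have hz : max M 0 < ‖z‖ := by simpa using hzM
  have hgrowth : ∀ n : ℕ, 2 ^ n * ‖z‖ ≤ ‖g^[n] z‖ := by
    intro n
    induction n with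
    | zero => simp
    | succ n ih =>
      have hn : M < ‖g^[n] z‖ := (le_max_left _ _).trans_lt <| hz.trans_le <|
        (le_mul_of_one_le_left (norm_nonneg _) (one_le_pow₀ one_le_two)).trans ih
      rw [Function.iterate_succ_apply', pow_succ]
      calc 2 ^ n * 2 * ‖z‖ = 2 * (2 ^ n * ‖z‖) := by ring
        _ ≤ 2 * ‖g^[n] z‖ := by gcongr
        _ ≤ ‖g (g^[n] z)‖ := hM (by simpa using hn)
  have hescape : Tendsto (fun n => ‖g^[n] z‖) atTop atTop :=
    tendsto_atTop_mono hgrowth <| (tendsto_pow_atTop_atTop_of_one_lt one_lt_two).atTop_mul_const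
      ((le_max_right _ _).trans_lt hz)
  exact not_tendsto_nhds_of_tendsto_atTop hescape _ (show Tendsto _ _ _ from hzB).norm

end Basin

theorem Polynomial.eventually_two_mul_norm_le_norm_eval {𝕜 : Type*} [NormedField 𝕜]
    (f : Polynomial 𝕜) (hd : 2 ≤ f.natDegree) :
    ∀ᶠ z in cobounded 𝕜, 2 * ‖z‖ ≤ ‖f.eval z‖ := by
  have hdivX : 0 < f.divX.degree := natDegree_pos_iff_degree_pos.1 (by
    rw [natDegree_divX_eq_natDegree_tsub_one]; omega)
  have hdivX_large := f.divX.tendsto_norm_atTop hdivX tendsto_norm_cobounded_atTop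
  filter_upwards [hdivX_large.eventually_ge_atTop 3,
    tendsto_norm_cobounded_atTop.eventually_ge_atTop ‖f.coeff 0‖] with z hdivXz hz
  have heval : f.eval z = z * f.divX.eval z + f.coeff 0 := by
    simpa only [eval_add, eval_mul, eval_X, eval_C] using congrArg (eval z) f.X_mul_divX_add.symm
  calc 2 * ‖z‖ ≤ ‖z‖ * ‖f.divX.eval z‖ - ‖f.coeff 0‖ := by nlinarith [norm_nonneg z]
    _ = ‖z * f.divX.eval z‖ - ‖-f.coeff 0‖ := by rw [norm_mul, norm_neg]
    _ ≤ ‖z * f.divX.eval z - -f.coeff 0‖ := norm_sub_norm_le _ _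
    _ = ‖f.eval z‖ := by rw [heval, sub_neg_eq_add]

section ConnectedComponent

variable {X : Type*} [TopologicalSpace X]

theorem mapsTo_connectedComponentIn_of_mapsTo {g : X → X} (hg : Continuous g) {s : Set X}
    (hs : MapsTo g s s) {x : X} (hx : x ∈ s) (hfix : g x = x) :
    MapsTo g (connectedComponentIn s x) (connectedComponentIn s x) := by
  have := hg.continuousOn.mapsTo_connectedComponentIn hx
  rw [hfix] at this
  exact this.mono_right (connectedComponentIn_mono x hs.image_subset)

theorem IsOpen.closure_connectedComponentIn_inter_subset [LocallyConnectedSpace X] {s : Set X}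
    (hs : IsOpen s) (x : X) :
    closure (connectedComponentIn s x) ∩ s ⊆ connectedComponentIn s x := by
  rintro y ⟨hy, hys⟩
  obtain ⟨w, hwy, hwx⟩ := mem_closure_iff.1 hy _ hs.connectedComponentIn
    (mem_connectedComponentIn hys)
  rw [connectedComponentIn_eq hwx, ← connectedComponentIn_eq hwy]
  exact mem_connectedComponentIn hys

theorem IsOpen.isCompact_connectedComponentIn_inter {Y : Type*} [PseudoMetricSpace Y]
    [ProperSpace Y] [LocallyConnectedSpace Y] {s : Set Y} (hs : IsOpen s)
    (hbdd : IsBounded s) {F : Set Y} (hF : IsClosed F) (hFs : F ⊆ s) (x : Y) :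
    IsCompact (connectedComponentIn s x ∩ F) := by
  have : connectedComponentIn s x ∩ F = closure (connectedComponentIn s x) ∩ F :=
    Subset.antisymm (inter_subset_inter_left _ subset_closure) fun y hy =>
      ⟨hs.closure_connectedComponentIn_inter_subset x ⟨hy.1, hFs hy.2⟩, hy.2⟩
  rw [this]
  exact isCompact_of_isClosed_isBounded (isClosed_closure.inter hF)
    (hbdd.subset (inter_subset_right.trans hFs))

end ConnectedComponent

/-- Fatou's theorem on critical points in immediate basins, polynomial case: if `f` is a
complex polynomial of degree at least `2` and `z₀` is an attracting fixed point of `f`,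
then the connected component containing `z₀` of the basin
`B = {z : f^[n](z) → z₀}` (the immediate basin) contains a critical point of `f`. -/
theorem fatou_critical_point_in_immediate_basin (f : Polynomial ℂ)
    (hd : 2 ≤ f.natDegree) (z₀ : ℂ)
    (hfix : f.eval z₀ = z₀)
    (hattr : ‖f.derivative.eval z₀‖ < 1) :
    ∃ c ∈ connectedComponentIn
        {z : ℂ | Filter.Tendsto (fun n => (fun w => f.eval w)^[n] z)
          Filter.atTop (nhds z₀)} z₀,
      f.derivative.eval c = 0 := by
  set G : ℂ → ℂ := fun w => f.eval w
  set Ω := connectedComponentIn (basin G z₀) z₀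
  change ∃ c ∈ Ω, _
  have hG : ∀ x, HasStrictDerivAt G (f.derivative.eval x) x := f.hasStrictDerivAt
  obtain ⟨r, hr, hrB⟩ := exists_closedBall_subset_basin (hG z₀) hfix hattr
  have hBopen : IsOpen (basin G z₀) :=
    isOpen_basin f.continuous (mem_of_superset (closedBall_mem_nhds z₀ hr) hrB)
  have hBbdd : IsBounded (basin G z₀) :=
    isBounded_basin (f.eventually_two_mul_norm_le_norm_eval hd) z₀
  obtain ⟨R, hR⟩ := hBbdd.subset_ball z₀
  have hz₀B : z₀ ∈ basin G z₀ := hrB (mem_closedBall_self hr.le)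
  have hz₀ : z₀ ∈ Ω := mem_connectedComponentIn hz₀B
  have hGΩ : MapsTo G Ω Ω := mapsTo_connectedComponentIn_of_mapsTo f.continuous
    (fun z => (iterate_mem_basin_iff 1).2) hz₀B hfix
  by_contra! hcrit
  have hexpand : ∀ n, r / R ≤ ‖f.derivative.eval z₀‖ ^ n := fun n => by
    have := div_le_norm_deriv_of_isCompact_inter_preimage (f.continuous.iterate n)
      hBopen.connectedComponentIn
      (exists_hasStrictDerivAt_iterate hGΩ (fun x hx => ⟨_, hcrit x hx, hG x⟩) n) hz₀ hr
      ((connectedComponentIn_subset _ _).trans hR) ?_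
    · rwa [((hG z₀).iterate _ hfix n).hasDerivAt.deriv, norm_pow] at this
    rw [Function.iterate_fixed hfix]
    exact hBopen.isCompact_connectedComponentIn_inter hBbdd
      (isClosed_closedBall.preimage (f.continuous.iterate n))
      (fun z hz => (iterate_mem_basin_iff n).1 (hrB hz)) z₀
  have hRpos : 0 < R := dist_nonneg.trans_lt (hR hz₀B)
  exact (div_pos hr hRpos).not_ge <|
    ge_of_tendsto' (tendsto_pow_atTop_nhds_zero_of_lt_one (norm_nonneg _) hattr) hexpand
end
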